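/- arXiv:1805.12454 — 2 statements merged into one kernel-verified Lean document; each statement's English description precedes it below -/
import Mathlib

section
/- Let X be a spectral space. Then 𝒳(X), endowed with the Zariski topology, is a spectral space; moreover, each basic open set 𝒰(Ω), for Ω a quasi-compact open subset of X, is quasi-compact in 𝒳(X). -/
open Set TopologicalSpace Topology

/-- A subset of a topological space is *inverse-closed* if it is an intersection of a
family of quasi-compact open subsets. -/
def InvClosed {X : Type*} [TopologicalSpace X] (Y : Set X) : Prop :=
  ∃ 𝒪 : Set (Set X), (∀ U ∈ 𝒪, IsOpen U ∧ IsCompact U) ∧ Y = ⋂₀ 𝒪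

/-- A subset is *saturated* if it is an intersection of open sets. -/
def IsSatd {X : Type*} [TopologicalSpace X] (Y : Set X) : Prop :=
  ∃ 𝒪 : Set (Set X), (∀ U ∈ 𝒪, IsOpen U) ∧ Y = ⋂₀ 𝒪

/-- A topological space is *spectral* if it is T0, quasi-compact, sober, and the
quasi-compact open subsets form a basis closed under finite intersections. -/
def IsSpectralSpace (X : Type*) [TopologicalSpace X] : Prop :=
  T0Space X ∧ CompactSpace X ∧ QuasiSober X ∧
    IsTopologicalBasis {U : Set X | IsOpen U ∧ IsCompact U} ∧
    ∀ U V : Set X, IsOpen U → IsCompact U → IsOpen V → IsCompact V → IsCompact (U ∩ V)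

/-- `𝒳(X)`: the nonempty inverse-closed subsets of `X`. -/
abbrev XCal (X : Type*) [TopologicalSpace X] : Type _ :=
  {Y : Set X // Y.Nonempty ∧ InvClosed Y}

/-- The Zariski topology on `𝒳(X)`, with basic open sets `𝒰(Ω) = {Y : Y ⊆ Ω}` for `Ω`
quasi-compact open in `X`. -/
instance XCal.instTop (X : Type*) [TopologicalSpace X] : TopologicalSpace (XCal X) :=
  generateFrom {S : Set (XCal X) | ∃ Ω : Set X, IsOpen Ω ∧ IsCompact Ω ∧
    S = {Y : XCal X | (Y : Set X) ⊆ Ω}}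

/-- The specialization-type order: `x ≤ y` iff `y ∈ closure {x}`. -/
def spord {X : Type*} [TopologicalSpace X] (x y : X) : Prop := y ∈ closure {x}

/-- Closure under generizations of a set `S`: all points `z ≤ s` for some `s ∈ S`. -/
def genOf {X : Type*} [TopologicalSpace X] (S : Set X) : Set X :=
  {z : X | ∃ s ∈ S, spord z s}

/-- A map is *spectral* if preimages of quasi-compact open sets are quasi-compact open. -/
def SpecMap {X Y : Type*} [TopologicalSpace X] [TopologicalSpace Y] (f : X → Y) : Prop :=
  ∀ Ω : Set Y, IsOpen Ω → IsCompact Ω → IsOpen (f ⁻¹' Ω) ∧ IsCompact (f ⁻¹' Ω)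

/-- The constructible topology on a spectral space: generated by the quasi-compact open
sets together with their complements. -/
def constructibleTop (X : Type*) [TopologicalSpace X] : TopologicalSpace X :=
  generateFrom ({U : Set X | IsOpen U ∧ IsCompact U} ∪
    {S : Set X | ∃ U : Set X, IsOpen U ∧ IsCompact U ∧ S = Uᶜ})

/-- `s` is the supremum of `S` for the order induced by the topology. -/
def IsSupOf {X : Type*} [TopologicalSpace X] (S : Set X) (s : X) : Prop :=
  (∀ c ∈ S, spord c s) ∧ ∀ t : X, (∀ c ∈ S, spord c t) → spord s t

/-- A map is sup-preserving if it sends existing finite suprema to suprema. -/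
def SupPreserving {X Y : Type*} [TopologicalSpace X] [TopologicalSpace Y] (f : X → Y) : Prop :=
  ∀ F : Set X, F.Finite → ∀ s : X, IsSupOf F s → IsSupOf (f '' F) (f s)

/-- A map is open onto its image. -/
def OpenOntoImage {X Y : Type*} [TopologicalSpace X] [TopologicalSpace Y] (f : X → Y) : Prop :=
  ∀ V : Set X, IsOpen V → ∃ W : Set Y, IsOpen W ∧ f '' V = W ∩ Set.range f

/-!
In `𝒳(X)` the specialization order is inclusion, which gives T0 and makes `𝒰(Ω)` quasi-compact,
as it has the greatest element `Ω`. Since `𝒰(Ω) ∩ 𝒰(Ω') = 𝒰(Ω ∩ Ω')`, the sets `𝒰(Ω)` form a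
basis of quasi-compact opens stable under intersection. The generic point of an irreducible
closed `𝒞` is the intersection of all quasi-compact opens `Ω` for which `𝒰(Ω)` meets `𝒞`; that
it is nonempty and lies in `𝒞` comes from the compactness of the constructible topology of `X`.
-/

section SpectralSpace

variable {X : Type*} [TopologicalSpace X]

theorem IsSpectralSpace.spectralSpace (hX : IsSpectralSpace X) : SpectralSpace X where
  toT0Space := hX.1
  toCompactSpace := hX.2.1
  toQuasiSober := hX.2.2.1
  toQuasiSeparatedSpace := ⟨hX.2.2.2.2⟩
  toPrespectralSpace := ⟨hX.2.2.2.1⟩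

theorem SpectralSpace.isSpectralSpace [SpectralSpace X] : IsSpectralSpace X :=
  ⟨inferInstance, inferInstance, inferInstance, PrespectralSpace.isTopologicalBasis,
    fun _ _ hU hUc hV hVc => hUc.inter_of_isOpen hVc hU hV⟩

lemma compactSpace_constructibleTopology [SpectralSpace X] :
    @CompactSpace X (constructibleTopology X) :=
  @Function.Surjective.compactSpace _ _ _ (constructibleTopology X) _
    (WithTopology.continuous_ofTopology _) _ (WithTopology.ofTopology_surjective _)

/-- A compactness argument in the constructible topology, where the quasi-compact open sets
are clopen. -/
lemma exists_finite_sInter_subset_of_sInter_subset [SpectralSpace X] {𝒱 : Set (Set X)}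
    (h𝒱 : ∀ V ∈ 𝒱, IsOpen V ∧ IsCompact V) {Ω : Set X} (hΩ : IsOpen Ω) (hΩc : IsCompact Ω)
    (hsub : ⋂₀ 𝒱 ⊆ Ω) : ∃ G ⊆ 𝒱, G.Finite ∧ ⋂₀ G ⊆ Ω := by
  by_contra! h
  have hclosed : ∀ C ∈ insert Ωᶜ 𝒱, IsClosed[constructibleTopology X] C := by
    rintro C (rfl | hC)
    · exact @IsClosed.mk _ (_) _ (by simpa using hΩc.isOpen_constructibleTopology_of_isOpen hΩ)
    · obtain ⟨hCo, hCc⟩ := h𝒱 C hC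
      exact @IsClosed.mk _ (_) _ (IsCompact.isOpen_constructibleTopology_of_isClosed
        (by rwa [compl_compl]) hCo.isClosed_compl)
  obtain ⟨x, hx⟩ := @CompactSpace.nonempty_sInter X (constructibleTopology X)
    compactSpace_constructibleTopology _ hclosed fun G hG hGf => by
    obtain ⟨x, hxG, hxΩ⟩ := not_subset.mp (h (G \ {Ωᶜ}) (by simpa using hG) (hGf.sdiff))
    refine ⟨x, fun C hC => ?_⟩
    by_cases hCΩ : C = Ωᶜ
    · exact hCΩ ▸ hxΩ
    · exact hxG C ⟨hC, hCΩ⟩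
  rw [sInter_insert] at hx
  exact hx.1 (hsub hx.2)

end SpectralSpace

section InvClosed

variable {X : Type*} [TopologicalSpace X]

lemma InvClosed.of_isOpen_of_isCompact {Ω : Set X} (hΩ : IsOpen Ω) (hΩc : IsCompact Ω) :
    InvClosed Ω :=
  ⟨{Ω}, by simpa using And.intro hΩ hΩc, (sInter_singleton Ω).symm⟩

lemma InvClosed.subset_of_forall {Y Z : Set X} (hZ : InvClosed Z)
    (h : ∀ Ω, IsOpen Ω → IsCompact Ω → Z ⊆ Ω → Y ⊆ Ω) : Y ⊆ Z := by
  obtain ⟨𝒪, h𝒪, rfl⟩ := hZ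
  exact subset_sInter fun U hU => h U (h𝒪 U hU).1 (h𝒪 U hU).2 (sInter_subset_of_mem hU)

end InvClosed

lemma isCompact_of_forall_specializes {X : Type*} [TopologicalSpace X] {S : Set X} {a : X}
    (ha : a ∈ S) (h : ∀ x ∈ S, x ⤳ a) : IsCompact S :=
  isCompact_of_finite_subcover fun U hU hcover => by
    obtain ⟨i, hi⟩ := mem_iUnion.mp (hcover ha)
    exact ⟨{i}, fun x hx => by simpa using (h x hx).mem_open (hU i) hi⟩

namespace XCal

variable {X : Type*} [TopologicalSpace X]

/-- The basic open set `𝒰(Ω)`. -/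
def basicOpen (Ω : Set X) : Set (XCal X) := {Y | (Y : Set X) ⊆ Ω}

lemma isOpen_basicOpen {Ω : Set X} (hΩ : IsOpen Ω) (hΩc : IsCompact Ω) :
    IsOpen (basicOpen Ω) :=
  isOpen_generateFrom_of_mem ⟨Ω, hΩ, hΩc, rfl⟩

lemma basicOpen_inter (Ω Ω' : Set X) : basicOpen Ω ∩ basicOpen Ω' = basicOpen (Ω ∩ Ω') := by
  ext Y
  exact subset_inter_iff.symm

lemma basicOpen_univ : basicOpen (univ : Set X) = univ :=
  eq_univ_of_forall fun _ => subset_univ _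

lemma specializes_iff_subset {Y Z : XCal X} : Y ⤳ Z ↔ (Y : Set X) ⊆ Z := by
  refine ⟨fun h => Z.2.2.subset_of_forall fun Ω hΩ hΩc hZ =>
    h.mem_open (isOpen_basicOpen hΩ hΩc) hZ, fun h => ?_⟩
  rw [Specializes, nhds_generateFrom, nhds_generateFrom]
  refine le_iInf₂ fun S ⟨hZS, Ω, _, _, hS⟩ => iInf₂_le S ⟨?_, Ω, ‹_›, ‹_›, hS⟩
  subst hS
  exact h.trans hZS

instance : T0Space (XCal X) :=
  t0Space_iff_inseparable _ |>.mpr fun _ _ h =>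
    Subtype.ext <| (specializes_iff_subset.mp h.specializes).antisymm
      (specializes_iff_subset.mp h.specializes')

lemma isCompact_basicOpen {Ω : Set X} (hΩ : IsOpen Ω) (hΩc : IsCompact Ω) :
    IsCompact (basicOpen Ω) := by
  rcases Ω.eq_empty_or_nonempty with rfl | hne
  · convert isCompact_empty
    exact eq_empty_of_forall_notMem fun Y hY => Y.2.1.ne_empty (subset_empty_iff.mp hY)
  · exact isCompact_of_forall_specializes (a := ⟨Ω, hne, .of_isOpen_of_isCompact hΩ hΩc⟩)
      (Subset.rfl : Ω ⊆ Ω) fun Y hY => specializes_iff_subset.mpr hY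

instance [CompactSpace X] : CompactSpace (XCal X) :=
  ⟨basicOpen_univ (X := X) ▸ isCompact_basicOpen isOpen_univ isCompact_univ⟩

lemma isTopologicalBasis_basicOpen [CompactSpace X] [QuasiSeparatedSpace X] :
    IsTopologicalBasis
      (range fun Ω : {Ω : Set X // IsOpen Ω ∧ IsCompact Ω} => basicOpen Ω.1) := by
  have hrange : range (fun Ω : {Ω : Set X // IsOpen Ω ∧ IsCompact Ω} => basicOpen Ω.1) =
      {S | ∃ Ω : Set X, IsOpen Ω ∧ IsCompact Ω ∧ S = basicOpen Ω} := by
    ext S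
    exact ⟨fun ⟨Ω, hS⟩ => ⟨Ω.1, Ω.2.1, Ω.2.2, hS.symm⟩,
      fun ⟨Ω, hΩ, hΩc, hS⟩ => ⟨⟨Ω, hΩ, hΩc⟩, hS.symm⟩⟩
  have hbasis : IsTopologicalBasis
      (insert univ {S | ∃ Ω : Set X, IsOpen Ω ∧ IsCompact Ω ∧ S = basicOpen Ω}) :=
    isTopologicalBasis_of_subbasis_of_inter rfl fun _ ⟨Ω, hΩ, hΩc, hS⟩ _ ⟨Ω', hΩ', hΩ'c, hS'⟩ =>
    ⟨Ω ∩ Ω', hΩ.inter hΩ', hΩc.inter_of_isOpen hΩ'c hΩ hΩ', hS ▸ hS' ▸ basicOpen_inter Ω Ω'⟩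
  have huniv : univ ∈ {S | ∃ Ω : Set X, IsOpen Ω ∧ IsCompact Ω ∧ S = basicOpen Ω} :=
    ⟨univ, isOpen_univ, isCompact_univ, basicOpen_univ.symm⟩
  rwa [insert_eq_of_mem huniv, ← hrange] at hbasis

instance [CompactSpace X] [QuasiSeparatedSpace X] : QuasiSeparatedSpace (XCal X) :=
  .of_isTopologicalBasis isTopologicalBasis_basicOpen fun Ω Ω' => by
    rw [basicOpen_inter]
    exact isCompact_basicOpen (Ω.2.1.inter Ω'.2.1) (Ω.2.2.inter_of_isOpen Ω'.2.2 Ω.2.1 Ω'.2.1)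

instance [CompactSpace X] [QuasiSeparatedSpace X] : PrespectralSpace (XCal X) :=
  .of_isTopologicalBasis' isTopologicalBasis_basicOpen fun Ω => isCompact_basicOpen Ω.2.1 Ω.2.2

section QuasiSober

variable [SpectralSpace X] {𝒞 : Set (XCal X)}

def compactOpensMeeting (𝒞 : Set (XCal X)) : Set (Set X) :=
  {Ω | IsOpen Ω ∧ IsCompact Ω ∧ (𝒞 ∩ basicOpen Ω).Nonempty}

lemma finiteInter_compactOpensMeeting (h𝒞 : IsIrreducible 𝒞) :
    FiniteInter (compactOpensMeeting 𝒞) where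
  univ_mem := ⟨isOpen_univ, isCompact_univ, by simpa [basicOpen_univ] using h𝒞.nonempty⟩
  inter_mem Ω hΩ Ω' hΩ' := ⟨hΩ.1.inter hΩ'.1, hΩ.2.1.inter_of_isOpen hΩ'.2.1 hΩ.1 hΩ'.1,
    basicOpen_inter Ω Ω' ▸ h𝒞.isPreirreducible _ _ (isOpen_basicOpen hΩ.1 hΩ.2.1)
      (isOpen_basicOpen hΩ'.1 hΩ'.2.1) hΩ.2.2 hΩ'.2.2⟩

lemma mem_compactOpensMeeting_of_sInter_subset (h𝒞 : IsIrreducible 𝒞) {Ω : Set X}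
    (hΩ : IsOpen Ω) (hΩc : IsCompact Ω) (hsub : ⋂₀ compactOpensMeeting 𝒞 ⊆ Ω) :
    Ω ∈ compactOpensMeeting 𝒞 := by
  obtain ⟨G, hG, hGf, hGΩ⟩ :=
    exists_finite_sInter_subset_of_sInter_subset (fun V hV => ⟨hV.1, hV.2.1⟩) hΩ hΩc hsub
  lift G to Finset (Set X) using hGf
  obtain ⟨-, -, Z, hZ𝒞, hZG⟩ := (finiteInter_compactOpensMeeting h𝒞).finiteInter_mem G hG
  exact ⟨hΩ, hΩc, Z, hZ𝒞, Subset.trans hZG hGΩ⟩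

lemma sInter_compactOpensMeeting_nonempty (h𝒞 : IsIrreducible 𝒞) :
    (⋂₀ compactOpensMeeting 𝒞).Nonempty := by
  by_contra! hempty
  obtain ⟨-, -, Z, -, hZ⟩ := mem_compactOpensMeeting_of_sInter_subset h𝒞 isOpen_empty
    isCompact_empty hempty.subset
  exact Z.2.1.ne_empty (subset_empty_iff.mp hZ)

def genericPointOf (h𝒞 : IsIrreducible 𝒞) : XCal X :=
  ⟨⋂₀ compactOpensMeeting 𝒞, sInter_compactOpensMeeting_nonempty h𝒞,
    _, fun _ hΩ => ⟨hΩ.1, hΩ.2.1⟩, rfl⟩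

lemma isGenericPoint_genericPointOf (h𝒞 : IsIrreducible 𝒞) (hcl : IsClosed 𝒞) :
    IsGenericPoint (genericPointOf h𝒞) 𝒞 := by
  have hspec : ∀ Z ∈ 𝒞, genericPointOf h𝒞 ⤳ Z := fun Z hZ =>
    specializes_iff_subset.mpr <| Z.2.2.subset_of_forall fun Ω hΩ hΩc hZΩ =>
      sInter_subset_of_mem ⟨hΩ, hΩc, Z, hZ, hZΩ⟩
  have hmem : genericPointOf h𝒞 ∈ 𝒞 := by
    refine hcl.closure_subset (isTopologicalBasis_basicOpen.mem_closure_iff.mpr ?_)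
    rintro _ ⟨Ω, rfl⟩ hΩ
    exact (mem_compactOpensMeeting_of_sInter_subset h𝒞 Ω.2.1 Ω.2.2 hΩ).2.2.mono
      (inter_comm _ _).subset
  exact (closure_minimal (singleton_subset_iff.mpr hmem) hcl).antisymm fun Z hZ =>
    specializes_iff_mem_closure.mp (hspec Z hZ)

instance : QuasiSober (XCal X) :=
  ⟨fun h𝒞 hcl => ⟨_, isGenericPoint_genericPointOf h𝒞 hcl⟩⟩

end QuasiSober

end XCal

instance {X : Type*} [TopologicalSpace X] [SpectralSpace X] : SpectralSpace (XCal X) where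
/-- For a spectral space `X`, the space `𝒳(X)` with the Zariski
topology is a spectral space, and each basic open set `𝒰(Ω)`, for `Ω`
quasi-compact open in `X`, is quasi-compact in `𝒳(X)`. -/
theorem stmt5 {X : Type*} [TopologicalSpace X] (hX : IsSpectralSpace X) :
    IsSpectralSpace (XCal X) ∧
    ∀ Ω : Set X, IsOpen Ω → IsCompact Ω →
      IsCompact {Y : XCal X | (Y : Set X) ⊆ Ω} := by
  have := hX.spectralSpace
  exact ⟨SpectralSpace.isSpectralSpace, fun Ω => XCal.isCompact_basicOpen⟩
end

section
/- Let ψ : X1 → X2 be a spectral map of spectral spaces and let 𝒳(ψ) : 𝒳(X1) → 𝒳(X2) be the induced map C ↦ ψ(C)^gen. If ψ is a topological embedding (respectively, a homeomorphism), then 𝒳(ψ) is a topological embedding (respectively, a homeomorphism). -/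
/-!
Inverse-closed sets and open sets are stable under generization, so for open `Ω` we have
`ψ(C)^gen ⊆ Ω ↔ C ⊆ ψ⁻¹(Ω)`: the map `𝒳(ψ)` pulls the basic open `𝒰(Ω)` back to `𝒰(ψ⁻¹(Ω))`.
If `ψ` is an embedding, every quasi-compact open of `X₁` is `ψ⁻¹(Ω)` for a quasi-compact open `Ω`
of `X₂` (cover it by quasi-compact opens of `X₂` and use compactness), so these pullbacks are
all the basic opens of `𝒳(X₁)`; and `ψ⁻¹(ψ(C)^gen) = C^gen = C` gives injectivity. If `ψ` is
moreover surjective, `D = 𝒳(ψ)(ψ⁻¹(D))`.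
-/

open Set TopologicalSpace Topology

open Function

section Generization

variable {X Y : Type*} [TopologicalSpace X] [TopologicalSpace Y]

lemma spord_iff_specializes {x y : X} : spord x y ↔ x ⤳ y :=
  specializes_iff_mem_closure.symm

lemma InvClosed.stableUnderGeneralization {C : Set X} (hC : InvClosed C) :
    StableUnderGeneralization C := by
  obtain ⟨𝒪, h𝒪, rfl⟩ := hC
  exact stableUnderGeneralization_sInter 𝒪 fun U hU ↦ (h𝒪 U hU).1.stableUnderGeneralization

lemma InvClosed.preimage {f : X → Y} (hf : SpecMap f) {D : Set Y} (hD : InvClosed D) :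
    InvClosed (f ⁻¹' D) := by
  obtain ⟨𝒪, h𝒪, rfl⟩ := hD
  refine ⟨Set.preimage f '' 𝒪, ?_, by rw [sInter_image, preimage_sInter]⟩
  rintro _ ⟨U, hU, rfl⟩
  exact hf U (h𝒪 U hU).1 (h𝒪 U hU).2

lemma subset_genOf (S : Set X) : S ⊆ genOf S :=
  fun x hx ↦ ⟨x, hx, spord_iff_specializes.2 specializes_rfl⟩

lemma genOf_subset_iff {S T : Set X} (hT : StableUnderGeneralization T) :
    genOf S ⊆ T ↔ S ⊆ T :=
  ⟨(subset_genOf S).trans, fun h _ ⟨_, hs, hzs⟩ ↦ hT (spord_iff_specializes.1 hzs) (h hs)⟩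

lemma StableUnderGeneralization.genOf_eq {S : Set X} (hS : StableUnderGeneralization S) :
    genOf S = S :=
  ((genOf_subset_iff hS).2 subset_rfl).antisymm (subset_genOf S)

lemma Topology.IsInducing.preimage_genOf_image {f : X → Y} (hf : IsInducing f) (S : Set X) :
    f ⁻¹' genOf (f '' S) = genOf S := by
  ext x
  simp [genOf, spord_iff_specializes, hf.specializes_iff]

lemma Topology.IsInducing.exists_isOpen_isCompact_preimage_eq {f : X → Y} (hf : IsInducing f)
    (hb : IsTopologicalBasis {U : Set Y | IsOpen U ∧ IsCompact U}) {V : Set X} (hVo : IsOpen V)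
    (hVc : IsCompact V) : ∃ Ω : Set Y, IsOpen Ω ∧ IsCompact Ω ∧ f ⁻¹' Ω = V := by
  obtain ⟨W, hWo, rfl⟩ := hf.isOpen_iff.1 hVo
  have hcover : f ⁻¹' W ⊆ ⋃ U ∈ {U ∈ {U : Set Y | IsOpen U ∧ IsCompact U} | U ⊆ W}, f ⁻¹' U := by
    rw [← preimage_iUnion₂, ← sUnion_eq_biUnion, ← hb.open_eq_sUnion' hWo]
  obtain ⟨t, htW, htfin, htcover⟩ :=
    hVc.elim_finite_subcover_image (fun U hU ↦ hU.1.1.preimage hf.continuous) hcover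
  refine ⟨⋃₀ t, isOpen_sUnion fun U hU ↦ (htW hU).1.1,
    htfin.isCompact_sUnion fun U hU ↦ (htW hU).1.2, ?_⟩
  rw [preimage_sUnion]
  exact (iUnion₂_subset fun U hU ↦ preimage_mono (htW hU).2).antisymm htcover

end Generization

namespace XCal

variable {X₁ X₂ : Type*} [TopologicalSpace X₁] [TopologicalSpace X₂] {ψ : X₁ → X₂}
  {Ψ : XCal X₁ → XCal X₂}

lemma preimage_setOf_subset (hΨ : ∀ C : XCal X₁, (Ψ C : Set X₂) = genOf (ψ '' (C : Set X₁)))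
    {Ω : Set X₂} (hΩ : IsOpen Ω) :
    Ψ ⁻¹' {D : XCal X₂ | (D : Set X₂) ⊆ Ω} = {C : XCal X₁ | (C : Set X₁) ⊆ ψ ⁻¹' Ω} := by
  ext C
  simp only [mem_preimage, mem_ofPred_eq, hΨ C, genOf_subset_iff hΩ.stableUnderGeneralization,
    image_subset_iff]

lemma isInducing_of_isInducing
    (hΨ : ∀ C : XCal X₁, (Ψ C : Set X₂) = genOf (ψ '' (C : Set X₁))) (hψ : SpecMap ψ)
    (hψi : IsInducing ψ) (hb : IsTopologicalBasis {U : Set X₂ | IsOpen U ∧ IsCompact U}) :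
    IsInducing Ψ := by
  refine ⟨?_⟩
  change generateFrom _ = induced Ψ (generateFrom _)
  rw [induced_generateFrom_eq]
  congr 1
  ext S
  constructor
  · rintro ⟨V, hVo, hVc, rfl⟩
    obtain ⟨Ω, hΩo, hΩc, rfl⟩ := hψi.exists_isOpen_isCompact_preimage_eq hb hVo hVc
    exact ⟨_, ⟨Ω, hΩo, hΩc, rfl⟩, preimage_setOf_subset hΨ hΩo⟩
  · rintro ⟨_, ⟨Ω, hΩo, hΩc, rfl⟩, rfl⟩
    exact ⟨ψ ⁻¹' Ω, (hψ Ω hΩo hΩc).1, (hψ Ω hΩo hΩc).2, preimage_setOf_subset hΨ hΩo⟩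

lemma injective_of_isInducing
    (hΨ : ∀ C : XCal X₁, (Ψ C : Set X₂) = genOf (ψ '' (C : Set X₁))) (hψi : IsInducing ψ) :
    Injective Ψ := by
  have hpre (C : XCal X₁) : ψ ⁻¹' (Ψ C : Set X₂) = C := by
    rw [hΨ, hψi.preimage_genOf_image, C.2.2.stableUnderGeneralization.genOf_eq]
  intro C D h
  exact Subtype.ext (by rw [← hpre C, ← hpre D, h])

lemma surjective_of_surjective
    (hΨ : ∀ C : XCal X₁, (Ψ C : Set X₂) = genOf (ψ '' (C : Set X₁))) (hψ : SpecMap ψ)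
    (hψs : Surjective ψ) : Surjective Ψ := by
  intro D
  refine ⟨⟨ψ ⁻¹' D, D.2.1.preimage hψs, D.2.2.preimage hψ⟩, Subtype.ext ?_⟩
  rw [hΨ, image_preimage_eq _ hψs, D.2.2.stableUnderGeneralization.genOf_eq]

end XCal

theorem stmt14_general {X₁ X₂ : Type*} [TopologicalSpace X₁] [TopologicalSpace X₂]
    (hX₂ : IsSpectralSpace X₂)
    (ψ : X₁ → X₂) (hψ : SpecMap ψ)
    (Ψ : XCal X₁ → XCal X₂)
    (hΨ : ∀ C : XCal X₁, (Ψ C : Set X₂) = genOf (ψ '' (C : Set X₁))) :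
    (IsEmbedding ψ → IsEmbedding Ψ) ∧ (IsHomeomorph ψ → IsHomeomorph Ψ) := by
  have hemb (h : IsEmbedding ψ) : IsEmbedding Ψ :=
    ⟨XCal.isInducing_of_isInducing hΨ hψ h.isInducing hX₂.2.2.2.1,
      XCal.injective_of_isInducing hΨ h.isInducing⟩
  exact ⟨hemb, fun h ↦ isHomeomorph_iff_isEmbedding_surjective.2
    ⟨hemb h.isEmbedding, XCal.surjective_of_surjective hΨ hψ h.surjective⟩⟩

/-- If the spectral map `ψ : X₁ → X₂` is a topological embedding
(resp. a homeomorphism), then so is the induced map `𝒳(ψ) : C ↦ ψ(C)^gen`. -/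
theorem stmt14 {X₁ X₂ : Type*} [TopologicalSpace X₁] [TopologicalSpace X₂]
    (hX₁ : IsSpectralSpace X₁) (hX₂ : IsSpectralSpace X₂)
    (ψ : X₁ → X₂) (hψ : SpecMap ψ)
    (Ψ : XCal X₁ → XCal X₂)
    (hΨ : ∀ C : XCal X₁, (Ψ C : Set X₂) = genOf (ψ '' (C : Set X₁))) :
    (IsEmbedding ψ → IsEmbedding Ψ) ∧ (IsHomeomorph ψ → IsHomeomorph Ψ) :=
  stmt14_general hX₂ ψ hψ Ψ hΨ
end
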